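/- For every natural number n > 3, the number N = 22·(10^(n−2) − 1) is a reverse divisor with quotient 4: rev(N) = 4·N. -/

import Mathlib

/-- Digit reversal of a natural number in base 10. -/
def rev (m : ℕ) : ℕ := Nat.ofDigits 10 ((Nat.digits 10 m).reverse)

lemma ofDigits_replicate_nine (k : ℕ) :
    Nat.ofDigits 10 (List.replicate k 9) = 10 ^ k - 1 := by
  induction k with
  | zero => simp [Nat.ofDigits]
  | succ k ih =>
    rw [List.replicate_succ, Nat.ofDigits_cons, ih, pow_succ]
    have : 1 ≤ 10 ^ k := Nat.one_le_pow _ _ (by norm_num)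
    omega

theorem rev_22_mul (n : ℕ) (hn : 3 < n) :
    rev (22 * (10 ^ (n - 2) - 1)) = 4 * (22 * (10 ^ (n - 2) - 1)) := by
  obtain ⟨k, hk⟩ : ∃ k, n - 2 = k + 2 := ⟨n - 4, by omega⟩
  rw [hk]
  set L : List ℕ := 8 :: 7 :: (List.replicate k 9 ++ [1, 2]) with hL
  have hp : 1 ≤ 10 ^ k := Nat.one_le_pow _ _ (by norm_num)
  have hN : 22 * (10 ^ (k + 2) - 1) = Nat.ofDigits 10 L := by
    rw [hL]
    simp only [Nat.ofDigits_cons, Nat.ofDigits_append, ofDigits_replicate_nine,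
      List.length_replicate]
    simp only [Nat.ofDigits_nil, pow_add]
    have h2 : (10:ℕ) ^ 2 = 100 := by norm_num
    omega
  have hdig : Nat.digits 10 (22 * (10 ^ (k + 2) - 1)) = L := by
    rw [hN]
    apply Nat.digits_ofDigits 10 (by norm_num)
    · intro l hl
      simp only [hL, List.mem_cons, List.mem_append, List.mem_replicate,
        List.mem_singleton] at hl
      rcases hl with h|h|h|h|h|h <;> first | omega | exact absurd h List.not_mem_nil
    · intro h
      simp [hL, List.getLast]
  rw [rev, hdig]
  have hrev : L.reverse = 2 :: 1 :: (List.replicate k 9 ++ [7, 8]) := by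
    simp [hL, List.reverse_replicate]
  rw [hrev]
  simp only [Nat.ofDigits_cons, Nat.ofDigits_append, ofDigits_replicate_nine,
    List.length_replicate]
  simp only [Nat.ofDigits_nil, pow_add]
  have h2 : (10:ℕ) ^ 2 = 100 := by norm_num
  omega
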